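/- Let k ≥ 0 be an integer, T ⊂ ℝ² a bounded open set with x_T ∈ T. Then the space of ℝ²-valued polynomials of total degree ≤ k on T admits the direct sum decomposition ℙ^k(T; ℝ²) = rot ℙ^{k+1}(T) ⊕ (x − x_T)ℙ^{k−1}(T), where rot w = (∂₂w, −∂₁w) and ℙ^{−1}(T) = {0}. -/

import Mathlib

/-!
With the Euler operator `E p = ∑ i, xᵢ ∂ᵢ p`, which multiplies the monomial `x^d` by `|d|`, a direct
computation gives, for every `v = (a, b)`, the Koszul identity
`rot (x₂ a - x₁ b) + x div v = v + E v`.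
Since `1 + E` is invertible on polynomials of degree `≤ k`, applying this to `(1 + E)⁻¹ v` writes
`v` as a rotational plus `x q`. Conversely, if `rot w = x q` then taking the divergence gives
`0 = div (x q) = 2 q + E q`, and `2 + E` is injective, so `q = 0`. Translating by `x_T` moves the
centre from the origin to `x_T`.
-/

open MvPolynomial

namespace MvPolynomial

section Euler

variable {σ R : Type*} [CommSemiring R]

theorem coeff_X_mul_pderiv (i : σ) (p : MvPolynomial σ R) (d : σ →₀ ℕ) :
    coeff d (X i * pderiv i p) = d i * coeff d p := by
  induction p using induction_on' with
  | monomial n a =>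
    classical
    rw [X_mul_pderiv_monomial, coeff_smul, coeff_monomial]
    split_ifs with h
    · simp [h, nsmul_eq_mul]
    · simp
  | add p q hp hq => simp only [map_add, mul_add, coeff_add, hp, hq]

theorem totalDegree_pderiv_le (i : σ) (p : MvPolynomial σ R) :
    (pderiv i p).totalDegree ≤ p.totalDegree - 1 := by
  classical
  refine Finset.sup_le fun d hd => ?_
  rw [mem_support_iff, coeff_pderiv] at hd
  have hle := le_totalDegree (mem_support_iff.mpr (left_ne_zero_of_mul hd))
  change (d + Finsupp.single i 1).degree ≤ _ at hle
  change d.degree ≤ _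
  rw [map_add, Finsupp.degree_single] at hle
  omega

variable [Fintype σ]

noncomputable def euler (p : MvPolynomial σ R) : MvPolynomial σ R :=
  ∑ i, X i * pderiv i p

theorem coeff_euler (p : MvPolynomial σ R) (d : σ →₀ ℕ) :
    coeff d (euler p) = d.degree * coeff d p := by
  simp [euler, coeff_sum, coeff_X_mul_pderiv, ← Finset.sum_mul, Finsupp.degree_eq_sum]

theorem sum_pderiv_X_mul (p : MvPolynomial σ R) :
    ∑ i, pderiv i (X i * p) = Fintype.card σ • p + euler p := by
  simp [Finset.sum_add_distrib, euler, add_comm]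

end Euler

section CharZero

variable {σ K : Type*} [Fintype σ] [Field K] [CharZero K]

theorem eq_zero_of_nsmul_add_euler_eq_zero {n : ℕ} (hn : n ≠ 0) {p : MvPolynomial σ K}
    (h : n • p + euler p = 0) : p = 0 := by
  ext d
  have hd := congrArg (coeff d) h
  rw [coeff_add, coeff_smul, coeff_euler, nsmul_eq_mul, ← add_mul, coeff_zero] at hd
  have hnd : (n + d.degree : K) ≠ 0 := by norm_cast; omega
  exact (mul_eq_zero.mp hd).resolve_left hnd

theorem exists_nsmul_add_euler_eq {n : ℕ} (hn : n ≠ 0) (p : MvPolynomial σ K) :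
    ∃ r : MvPolynomial σ K, r.totalDegree ≤ p.totalDegree ∧ n • r + euler r = p := by
  classical
  set r := ∑ d ∈ p.support, monomial d (coeff d p / (n + d.degree))
  have coeff_r : ∀ d, coeff d r = coeff d p / (n + d.degree) := by
    intro d
    simp only [r, coeff_sum, coeff_monomial, Finset.sum_ite_eq', mem_support_iff]
    split_ifs with h
    · rfl
    · simp [not_not.mp h]
  refine ⟨r, totalDegree_le_of_support_subset fun d hd => ?_, ?_⟩
  · rw [mem_support_iff, coeff_r] at *
    exact left_ne_zero_of_mul (div_eq_mul_inv (coeff d p) _ ▸ hd)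
  · ext d
    have hnd : (n + d.degree : K) ≠ 0 := by norm_cast; omega
    rw [coeff_add, coeff_smul, coeff_euler, coeff_r, nsmul_eq_mul]
    field_simp

end CharZero

theorem pderiv_comm {σ R : Type*} [CommRing R] (i j : σ) (p : MvPolynomial σ R) :
    pderiv i (pderiv j p) = pderiv j (pderiv i p) := by
  have hcomm : ⁅pderiv i, pderiv j⁆ = (0 : Derivation R (MvPolynomial σ R) (MvPolynomial σ R)) :=
    derivation_ext fun k => by
      classical
      rw [Derivation.commutator_apply]
      simp [pderiv_X, Pi.single_apply, apply_ite]
  have := congrArg (fun D => D p) hcomm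
  rw [Derivation.commutator_apply] at this
  exact sub_eq_zero.mp this

section Translate

variable {σ R : Type*} [CommRing R]

noncomputable def translate (c : σ → R) : MvPolynomial σ R ≃ₐ[R] MvPolynomial σ R :=
  AlgEquiv.ofAlgHom (aeval fun i => X i + C (c i)) (aeval fun i => X i - C (c i))
    (algHom_ext fun i => by simp) (algHom_ext fun i => by simp)

@[simp]
theorem translate_X (c : σ → R) (i : σ) : translate c (X i) = X i + C (c i) :=
  aeval_X _ _

@[simp]
theorem translate_C (c : σ → R) (a : R) : translate c (C a) = C a :=
  aeval_C _ _

theorem translate_symm (c : σ → R) : (translate c).symm = translate (-c) :=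
  AlgEquiv.coe_toAlgHom_injective <| algHom_ext fun i => by
    simp [translate, sub_eq_add_neg]

theorem pderiv_translate (c : σ → R) (i : σ) (p : MvPolynomial σ R) :
    pderiv i (translate c p) = translate c (pderiv i p) := by
  induction p using induction_on with
  | C a => simp [translate]
  | add p q hp hq => simp only [map_add, hp, hq]
  | mul_X p j hp =>
    rcases eq_or_ne j i with rfl | hne
    · simp [hp]
    · simp [hp, pderiv_X_of_ne hne]

theorem totalDegree_aeval_le {τ : Type*} {f : σ → MvPolynomial τ R}
    (hf : ∀ i, (f i).totalDegree ≤ 1) (p : MvPolynomial σ R) :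
    (aeval f p).totalDegree ≤ p.totalDegree := by
  conv_lhs => rw [p.as_sum, map_sum]
  refine totalDegree_finsetSum_le fun d hd => le_trans ?_ (le_totalDegree hd)
  rw [aeval_monomial, algebraMap_eq]
  refine (totalDegree_mul _ _).trans ?_
  rw [totalDegree_C, zero_add]
  refine (totalDegree_finsetProd _ _).trans (Finset.sum_le_sum fun i _ => ?_)
  calc (f i ^ d i).totalDegree ≤ d i * (f i).totalDegree := totalDegree_pow _ _
    _ ≤ d i := by simpa using Nat.mul_le_mul_left (d i) (hf i)

theorem totalDegree_translate_le (c : σ → R) (p : MvPolynomial σ R) :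
    (translate c p).totalDegree ≤ p.totalDegree :=
  totalDegree_aeval_le (fun i => (totalDegree_add _ _).trans <| max_le
    ((totalDegree_monomial_le _ _).trans (by simp)) (by simp)) p

end Translate

section Plane

variable {R K : Type*} [CommRing R] [Field K] [CharZero K]

theorem rot_koszul_add_X_mul_div (a b : MvPolynomial (Fin 2) R) :
    pderiv 1 (X 1 * a - X 0 * b) + X 0 * (pderiv 0 a + pderiv 1 b) = a + euler a ∧
      -pderiv 0 (X 1 * a - X 0 * b) + X 1 * (pderiv 0 a + pderiv 1 b) = b + euler b := by
  constructor <;> simp [euler, Fin.sum_univ_two] <;> ring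

theorem exists_rot_add_X_mul {k : ℕ} {a b : MvPolynomial (Fin 2) K}
    (ha : a.totalDegree ≤ k) (hb : b.totalDegree ≤ k) :
    ∃ w q : MvPolynomial (Fin 2) K,
      w.totalDegree ≤ k + 1 ∧ q.totalDegree ≤ k - 1 ∧ (k = 0 → q = 0) ∧
        a = pderiv 1 w + X 0 * q ∧ b = -pderiv 0 w + X 1 * q := by
  obtain ⟨a', ha', rfl⟩ := exists_nsmul_add_euler_eq one_ne_zero a
  obtain ⟨b', hb', rfl⟩ := exists_nsmul_add_euler_eq one_ne_zero b
  replace ha' := ha'.trans ha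
  replace hb' := hb'.trans hb
  obtain ⟨h0, h1⟩ := rot_koszul_add_X_mul_div a' b'
  refine ⟨X 1 * a' - X 0 * b', pderiv 0 a' + pderiv 1 b', ?_, ?_, ?_, ?_, ?_⟩
  · refine (totalDegree_sub _ _).trans (max_le ?_ ?_) <;>
      refine (totalDegree_mul _ _).trans ?_ <;> rw [totalDegree_X] <;> omega
  · have := totalDegree_pderiv_le 0 a'
    have := totalDegree_pderiv_le 1 b'
    exact (totalDegree_add _ _).trans (max_le (by omega) (by omega))
  · rintro rfl
    rw [totalDegree_eq_zero_iff_eq_C.mp (Nat.le_zero.mp ha'),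
      totalDegree_eq_zero_iff_eq_C.mp (Nat.le_zero.mp hb'), pderiv_C, pderiv_C, add_zero]
  · rw [h0, one_smul]
  · rw [h1, one_smul]

theorem eq_zero_of_rot_eq_X_mul {w q : MvPolynomial (Fin 2) K}
    (h0 : pderiv 1 w = X 0 * q) (h1 : -pderiv 0 w = X 1 * q) : q = 0 := by
  have hdiv := sum_pderiv_X_mul q
  rw [Fintype.card_fin, Fin.sum_univ_two, ← h0, ← h1, map_neg, pderiv_comm, add_neg_cancel]
    at hdiv
  exact eq_zero_of_nsmul_add_euler_eq_zero two_ne_zero hdiv.symm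

theorem exists_rot_add_X_sub_C_mul (c : Fin 2 → K) {k : ℕ} {a b : MvPolynomial (Fin 2) K}
    (ha : a.totalDegree ≤ k) (hb : b.totalDegree ≤ k) :
    ∃ w q : MvPolynomial (Fin 2) K,
      w.totalDegree ≤ k + 1 ∧ q.totalDegree ≤ k - 1 ∧ (k = 0 → q = 0) ∧
        a = pderiv 1 w + (X 0 - C (c 0)) * q ∧ b = -pderiv 0 w + (X 1 - C (c 1)) * q := by
  obtain ⟨w, q, hw, hq, hq0, h0, h1⟩ := exists_rot_add_X_mul
    ((totalDegree_translate_le c a).trans ha) ((totalDegree_translate_le c b).trans hb)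
  have hX : ∀ i, translate (-c) (X i) = X i - C (c i) := fun i => by simp [sub_eq_add_neg]
  have hinv : ∀ p, translate (-c) (translate c p) = p := fun p => by
    rw [← translate_symm, AlgEquiv.symm_apply_apply]
  refine ⟨translate (-c) w, translate (-c) q, (totalDegree_translate_le _ _).trans hw,
    (totalDegree_translate_le _ _).trans hq, fun hk => by simp [hq0 hk], ?_, ?_⟩
  · rw [← hinv a, h0, map_add, map_mul, pderiv_translate, hX]
  · rw [← hinv b, h1, map_add, map_neg, map_mul, pderiv_translate, hX]

theorem eq_zero_of_rot_eq_X_sub_C_mul (c : Fin 2 → K) {w q : MvPolynomial (Fin 2) K}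
    (h0 : pderiv 1 w = (X 0 - C (c 0)) * q) (h1 : -pderiv 0 w = (X 1 - C (c 1)) * q) :
    q = 0 := by
  have hX : ∀ i, translate c (X i - C (c i)) = X i := by simp
  rw [← map_eq_zero_iff (translate c) (translate c).injective]
  refine eq_zero_of_rot_eq_X_mul (w := translate c w) ?_ ?_
  · rw [pderiv_translate, h0, map_mul, hX]
  · rw [pderiv_translate, ← map_neg, h1, map_mul, hX]

end Plane

end MvPolynomial

theorem stmt_8_general
    (k : ℕ)
    (xT : Fin 2 → ℝ) :
    (∀ v : Fin 2 → MvPolynomial (Fin 2) ℝ, (∀ i, (v i).totalDegree ≤ k) →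
      ∃ w q : MvPolynomial (Fin 2) ℝ,
        w.totalDegree ≤ k + 1 ∧ q.totalDegree ≤ k - 1 ∧ (k = 0 → q = 0) ∧
        v 0 = pderiv (1 : Fin 2) w + (X 0 - C (xT 0)) * q ∧
        v 1 = -pderiv (0 : Fin 2) w + (X 1 - C (xT 1)) * q) ∧
    (∀ w q : MvPolynomial (Fin 2) ℝ,
      w.totalDegree ≤ k + 1 → q.totalDegree ≤ k - 1 → (k = 0 → q = 0) →
      pderiv (1 : Fin 2) w = (X 0 - C (xT 0)) * q →
      -pderiv (0 : Fin 2) w = (X 1 - C (xT 1)) * q →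
      q = 0 ∧ pderiv (1 : Fin 2) w = 0 ∧ pderiv (0 : Fin 2) w = 0) := by
  refine ⟨fun v hv => exists_rot_add_X_sub_C_mul xT (hv 0) (hv 1), fun w q _ _ _ h0 h1 => ?_⟩
  obtain rfl := eq_zero_of_rot_eq_X_sub_C_mul xT h0 h1
  exact ⟨rfl, by simpa using h0, by simpa using h1⟩

/-- 2D polynomial Koszul/Helmholtz decomposition:
`ℙ^k(T;ℝ²) = rot ℙ^{k+1}(T) ⊕ (x − x_T)ℙ^{k−1}(T)`, where `rot w = (∂₂w, −∂₁w)`,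
with the convention `ℙ^{−1}(T) = {0}` (encoded by `k = 0 → q = 0`). -/
theorem stmt_8
    (k : ℕ) (T : Set (Fin 2 → ℝ)) (hTopen : IsOpen T) (hTbdd : Bornology.IsBounded T)
    (xT : Fin 2 → ℝ) (hxT : xT ∈ T) :
    (∀ v : Fin 2 → MvPolynomial (Fin 2) ℝ, (∀ i, (v i).totalDegree ≤ k) →
      ∃ w q : MvPolynomial (Fin 2) ℝ,
        w.totalDegree ≤ k + 1 ∧ q.totalDegree ≤ k - 1 ∧ (k = 0 → q = 0) ∧
        v 0 = pderiv (1 : Fin 2) w + (X 0 - C (xT 0)) * q ∧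
        v 1 = -pderiv (0 : Fin 2) w + (X 1 - C (xT 1)) * q) ∧
    (∀ w q : MvPolynomial (Fin 2) ℝ,
      w.totalDegree ≤ k + 1 → q.totalDegree ≤ k - 1 → (k = 0 → q = 0) →
      pderiv (1 : Fin 2) w = (X 0 - C (xT 0)) * q →
      -pderiv (0 : Fin 2) w = (X 1 - C (xT 1)) * q →
      q = 0 ∧ pderiv (1 : Fin 2) w = 0 ∧ pderiv (0 : Fin 2) w = 0) :=
  stmt_8_general k xT
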